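/- The joint statistic (cros₂, nest₂) is symmetrically distributed over the set of matchings of [2n]: the number of perfect matchings of {1,...,2n} with k 2-crossings and ℓ 2-nestings equals the number with ℓ 2-crossings and k 2-nestings. -/
import Mathlib


/-- The set of all possible arcs `(i,j)` with `1 ≤ i < j ≤ n`. -/
def edgesOn (n : ℕ) : Finset (ℕ × ℕ) :=
  (Finset.Icc 1 n ×ˢ Finset.Icc 1 n).filter fun e => e.1 < e.2

/-- The multiset of lefthand endpoints of the arcs of `G`. -/
def leftM (G : Finset (ℕ × ℕ)) : Multiset ℕ := G.val.map Prod.fst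

/-- The multiset of righthand endpoints of the arcs of `G`. -/
def rightM (G : Finset (ℕ × ℕ)) : Multiset ℕ := G.val.map Prod.snd

/-- `G` is (the graph of) a perfect matching of `[2n]`: each element of `[2n]` is an
endpoint of exactly one arc. -/
abbrev IsMatching (n : ℕ) (G : Finset (ℕ × ℕ)) : Prop :=
  leftM G + rightM G = (Finset.Icc 1 (2 * n)).val

/-- Number of 2-crossings: pairs of arcs `(i₁,j₁), (i₂,j₂)` with `i₁ < i₂ < j₁ < j₂`. -/
def cros2 (G : Finset (ℕ × ℕ)) : ℕ :=
  ((G ×ˢ G).filter fun p => p.1.1 < p.2.1 ∧ p.2.1 < p.1.2 ∧ p.1.2 < p.2.2).card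

/-- Number of 2-nestings: pairs of arcs `(i₁,j₁), (i₂,j₂)` with `i₁ < i₂ < j₂ < j₁`. -/
def nest2 (G : Finset (ℕ × ℕ)) : ℕ :=
  ((G ×ˢ G).filter fun p => p.1.1 < p.2.1 ∧ p.2.1 < p.2.2 ∧ p.2.2 < p.1.2).card

namespace CN

variable {n : ℕ} {G : Finset (ℕ × ℕ)} {L : Finset ℕ} {r : ℕ → ℕ}

def cnt (S : Finset ℕ) (m : ℕ) : ℕ := (S.filter (· < m)).card

/-- the element of `S` of rank `r` (r elements below it). -/
def pick (S : Finset ℕ) (r : ℕ) : ℕ := (S.filter fun m => cnt S m = r).sum id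

lemma cnt_lt_cnt {S : Finset ℕ} {m m' : ℕ} (hm : m ∈ S) (h : m < m') :
    cnt S m < cnt S m' := by
  have hsub : insert m (S.filter (· < m)) ⊆ S.filter (· < m') := by
    intro x hx
    rcases Finset.mem_insert.mp hx with rfl | hx
    · exact Finset.mem_filter.mpr ⟨hm, h⟩
    · rcases Finset.mem_filter.mp hx with ⟨h1, h2⟩
      exact Finset.mem_filter.mpr ⟨h1, lt_trans h2 h⟩
  have := Finset.card_le_card hsub
  rwa [Finset.card_insert_of_notMem (by simp)] at this

lemma cnt_injOn {S : Finset ℕ} {m m' : ℕ} (hm : m ∈ S) (hm' : m' ∈ S)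
    (h : cnt S m = cnt S m') : m = m' := by
  rcases lt_trichotomy m m' with hlt | he | hlt
  · exact absurd h (Nat.ne_of_lt (cnt_lt_cnt hm hlt))
  · exact he
  · exact absurd h.symm (Nat.ne_of_lt (cnt_lt_cnt hm' hlt))

lemma cnt_lt_card {S : Finset ℕ} {m : ℕ} (hm : m ∈ S) : cnt S m < S.card := by
  have : S.filter (· < m) ⊆ S.erase m := by
    intro x hx
    rcases Finset.mem_filter.mp hx with ⟨h1, h2⟩
    exact Finset.mem_erase.mpr ⟨Nat.ne_of_lt h2, h1⟩
  calc cnt S m ≤ (S.erase m).card := Finset.card_le_card this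
    _ < S.card := Finset.card_erase_lt_of_mem hm

lemma exists_cnt {S : Finset ℕ} {r : ℕ} (hr : r < S.card) : ∃ m ∈ S, cnt S m = r := by
  have himg : S.image (cnt S) = Finset.range S.card := by
    apply Finset.eq_of_subset_of_card_le
    · intro x hx
      rcases Finset.mem_image.mp hx with ⟨m, hm, rfl⟩
      exact Finset.mem_range.mpr (cnt_lt_card hm)
    · rw [Finset.card_range, Finset.card_image_of_injOn fun a ha b hb => cnt_injOn ha hb]
  have : r ∈ S.image (cnt S) := himg ▸ Finset.mem_range.mpr hr
  rcases Finset.mem_image.mp this with ⟨m, hm, hc⟩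
  exact ⟨m, hm, hc⟩

lemma pick_eq {S : Finset ℕ} {m r : ℕ} (hm : m ∈ S) (hc : cnt S m = r) :
    pick S r = m := by
  have : S.filter (fun x => cnt S x = r) = {m} := by
    ext x
    simp only [Finset.mem_filter, Finset.mem_singleton]
    constructor
    · rintro ⟨hx, hcx⟩; exact cnt_injOn hx hm (hcx.trans hc.symm)
    · rintro rfl; exact ⟨hm, hc⟩
  rw [pick, this, Finset.sum_singleton, id]

lemma pick_spec {S : Finset ℕ} {r : ℕ} (hr : r < S.card) :
    pick S r ∈ S ∧ cnt S (pick S r) = r := by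
  rcases exists_cnt hr with ⟨m, hm, hc⟩
  rw [pick_eq hm hc]; exact ⟨hm, hc⟩

lemma nodup_parts (hm : IsMatching n G) :
    (leftM G).Nodup ∧ (rightM G).Nodup ∧ Disjoint (leftM G) (rightM G) := by
  have h : (leftM G + rightM G).Nodup := by rw [hm]; exact (Finset.Icc 1 (2*n)).nodup
  rw [Multiset.nodup_add] at h
  exact h

lemma mem_leftM {i : ℕ} : i ∈ leftM G ↔ ∃ e ∈ G, e.1 = i := by
  exact Multiset.mem_map

lemma mem_rightM {j : ℕ} : j ∈ rightM G ↔ ∃ e ∈ G, e.2 = j := by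
  exact Multiset.mem_map

lemma fst_injOn (hm : IsMatching n G) {e e' : ℕ × ℕ} (he : e ∈ G) (he' : e' ∈ G)
    (h : e.1 = e'.1) : e = e' :=
  Multiset.inj_on_of_nodup_map (nodup_parts hm).1 e he e' he' h

lemma snd_injOn (hm : IsMatching n G) {e e' : ℕ × ℕ} (he : e ∈ G) (he' : e' ∈ G)
    (h : e.2 = e'.2) : e = e' :=
  Multiset.inj_on_of_nodup_map (nodup_parts hm).2.1 e he e' he' h

lemma edge_bounds (hs : G ⊆ edgesOn (2 * n)) {e : ℕ × ℕ} (he : e ∈ G) :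
    1 ≤ e.1 ∧ e.1 < e.2 ∧ e.2 ≤ 2 * n := by
  have := hs he
  simp only [edgesOn, Finset.mem_filter, Finset.mem_product, Finset.mem_Icc] at this
  exact ⟨this.1.1.1, this.2, this.1.2.2⟩

lemma Lval (hm : IsMatching n G) : (G.image Prod.fst).val = leftM G := by
  rw [Finset.image_val]; exact Multiset.dedup_eq_self.mpr (nodup_parts hm).1

lemma Rval (hm : IsMatching n G) : (G.image Prod.snd).val = rightM G := by
  rw [Finset.image_val]; exact Multiset.dedup_eq_self.mpr (nodup_parts hm).2.1

lemma mem_Icc_iff_lr (hm : IsMatching n G) {x : ℕ} :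
    x ∈ Finset.Icc 1 (2 * n) ↔ (x ∈ leftM G ∨ x ∈ rightM G) := by
  constructor
  · intro hx
    have : x ∈ leftM G + rightM G := by rw [hm]; exact Finset.mem_def.mp hx
    exact Multiset.mem_add.mp this
  · intro hx
    have : x ∈ leftM G + rightM G := Multiset.mem_add.mpr hx
    rw [hm] at this; exact Finset.mem_def.mpr this

lemma Rset_eq (hm : IsMatching n G) :
    G.image Prod.snd = Finset.Icc 1 (2 * n) \ G.image Prod.fst := by
  ext x
  have hL : x ∈ G.image Prod.fst ↔ x ∈ leftM G := by
    rw [Finset.mem_def, Lval hm]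
  have hR : x ∈ G.image Prod.snd ↔ x ∈ rightM G := by
    rw [Finset.mem_def, Rval hm]
  rw [Finset.mem_sdiff, hL, hR, mem_Icc_iff_lr hm]
  constructor
  · intro h; exact ⟨Or.inr h, fun hl => (Multiset.disjoint_left.mp (nodup_parts hm).2.2) hl h⟩
  · rintro ⟨h | h, hnl⟩
    · exact absurd h hnl
    · exact h

def fstOf (G : Finset (ℕ × ℕ)) (j : ℕ) : ℕ := ((G.filter fun e => e.2 = j).sum Prod.fst)

/-- number of arcs nesting above the arc closing at `j` (2-nestings with inner closer `j`). -/
def rnk (G : Finset (ℕ × ℕ)) (j : ℕ) : ℕ :=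
  (G.filter fun e => e.1 < fstOf G j ∧ j < e.2).card

/-- number of arcs crossing the arc closing at `j` (2-crossings whose first closer is `j`). -/
def cork (G : Finset (ℕ × ℕ)) (j : ℕ) : ℕ :=
  (G.filter fun e => fstOf G j < e.1 ∧ e.1 < j ∧ j < e.2).card

lemma fstOf_eq (hm : IsMatching n G) {i j : ℕ} (h : (i, j) ∈ G) : fstOf G j = i := by
  have : G.filter (fun e => e.2 = j) = {(i, j)} := by
    ext e
    simp only [Finset.mem_filter, Finset.mem_singleton]
    constructor
    · rintro ⟨he, h2⟩; exact snd_injOn hm he h h2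
    · rintro rfl; exact ⟨h, rfl⟩
  rw [fstOf, this, Finset.sum_singleton]

lemma fstOf_mem (hm : IsMatching n G) {j : ℕ} (hj : j ∈ G.image Prod.snd) :
    (fstOf G j, j) ∈ G := by
  rcases Finset.mem_image.mp hj with ⟨e, he, rfl⟩
  rw [fstOf_eq hm (show (e.1, e.2) ∈ G from he)]
  exact he

lemma nest2_eq (hm : IsMatching n G) (hs : G ⊆ edgesOn (2 * n)) :
    nest2 G = ∑ j ∈ G.image Prod.snd, rnk G j := by
  rw [nest2]
  rw [Finset.card_eq_sum_card_fiberwise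
    (f := fun p : (ℕ×ℕ)×(ℕ×ℕ) => p.2.2) (t := G.image Prod.snd)
    (fun p hp => Finset.mem_image.mpr
      ⟨p.2, (Finset.mem_product.mp (Finset.mem_filter.mp hp).1).2, rfl⟩)]
  apply Finset.sum_congr rfl
  intro j hj
  have hfj : (fstOf G j, j) ∈ G := fstOf_mem hm hj
  apply Finset.card_bij (fun p _ => p.1)
  · intro p hp
    simp only [Finset.mem_filter, Finset.mem_product] at hp
    obtain ⟨⟨⟨hp1, hp2⟩, hc1, hc2, hc3⟩, hj2⟩ := hp
    have : p.2 = (fstOf G j, j) := by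
      have := fstOf_eq hm (show (p.2.1, p.2.2) ∈ G from hp2)
      rw [hj2] at this
      exact Prod.ext this.symm hj2
    rw [this] at hc1 hc3
    exact Finset.mem_filter.mpr ⟨hp1, hc1, hj2 ▸ hc3⟩
  · intro p hp q hq h
    simp only [Finset.mem_filter, Finset.mem_product] at hp hq
    have hp2 : p.2 = (fstOf G j, j) := by
      have := fstOf_eq hm (show (p.2.1, p.2.2) ∈ G from hp.1.1.2)
      rw [hp.2] at this; exact Prod.ext this.symm hp.2
    have hq2 : q.2 = (fstOf G j, j) := by
      have := fstOf_eq hm (show (q.2.1, q.2.2) ∈ G from hq.1.1.2)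
      rw [hq.2] at this; exact Prod.ext this.symm hq.2
    exact Prod.ext h (hp2.trans hq2.symm)
  · intro e he
    rcases Finset.mem_filter.mp he with ⟨heG, h1, h2⟩
    refine ⟨(e, (fstOf G j, j)), ?_, rfl⟩
    simp only [Finset.mem_filter, Finset.mem_product]
    exact ⟨⟨⟨heG, hfj⟩, h1, (edge_bounds hs hfj).2.1, h2⟩, trivial⟩

lemma cros2_eq (hm : IsMatching n G) (hs : G ⊆ edgesOn (2 * n)) :
    cros2 G = ∑ j ∈ G.image Prod.snd, cork G j := by
  rw [cros2]
  rw [Finset.card_eq_sum_card_fiberwise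
    (f := fun p : (ℕ×ℕ)×(ℕ×ℕ) => p.1.2) (t := G.image Prod.snd)
    (fun p hp => Finset.mem_image.mpr
      ⟨p.1, (Finset.mem_product.mp (Finset.mem_filter.mp hp).1).1, rfl⟩)]
  apply Finset.sum_congr rfl
  intro j hj
  have hfj : (fstOf G j, j) ∈ G := fstOf_mem hm hj
  apply Finset.card_bij (fun p _ => p.2)
  · intro p hp
    simp only [Finset.mem_filter, Finset.mem_product] at hp
    obtain ⟨⟨⟨hp1, hp2⟩, hc1, hc2, hc3⟩, hj2⟩ := hp
    have hp1e : p.1 = (fstOf G j, j) := by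
      have := fstOf_eq hm (show (p.1.1, p.1.2) ∈ G from hp1)
      rw [hj2] at this; exact Prod.ext this.symm hj2
    rw [hp1e] at hc1 hc2
    exact Finset.mem_filter.mpr ⟨hp2, hc1, hj2 ▸ hc2, hj2 ▸ hc3⟩
  · intro p hp q hq h
    simp only [Finset.mem_filter, Finset.mem_product] at hp hq
    have hp1 : p.1 = (fstOf G j, j) := by
      have := fstOf_eq hm (show (p.1.1, p.1.2) ∈ G from hp.1.1.1)
      rw [hp.2] at this; exact Prod.ext this.symm hp.2
    have hq1 : q.1 = (fstOf G j, j) := by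
      have := fstOf_eq hm (show (q.1.1, q.1.2) ∈ G from hq.1.1.1)
      rw [hq.2] at this; exact Prod.ext this.symm hq.2
    exact Prod.ext (hp1.trans hq1.symm) h
  · intro e he
    rcases Finset.mem_filter.mp he with ⟨heG, h1, h2, h3⟩
    refine ⟨((fstOf G j, j), e), ?_, rfl⟩
    simp only [Finset.mem_filter, Finset.mem_product]
    exact ⟨⟨⟨hfj, heG⟩, h1, h2, h3⟩, trivial⟩

def openc (G : Finset (ℕ × ℕ)) (j : ℕ) : ℕ :=
  (G.filter fun e => e.1 < j ∧ j ≤ e.2).card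

lemma rnk_cork_openc (hm : IsMatching n G) (hs : G ⊆ edgesOn (2 * n)) {j : ℕ}
    (hj : j ∈ G.image Prod.snd) : rnk G j + cork G j + 1 = openc G j := by
  set m := fstOf G j with hmj
  have harc : (m, j) ∈ G := fstOf_mem hm hj
  have hmlt : m < j := (edge_bounds hs harc).2.1
  -- the open set splits in three according to position of e.1 vs m
  have key : G.filter (fun e => e.1 < j ∧ j ≤ e.2)
      = (G.filter fun e => e.1 < m ∧ j < e.2)
        ∪ (G.filter fun e => m < e.1 ∧ e.1 < j ∧ j < e.2) ∪ {(m, j)} := by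
    ext e
    simp only [Finset.mem_union, Finset.mem_filter, Finset.mem_singleton]
    constructor
    · rintro ⟨he, h1, h2⟩
      rcases lt_trichotomy e.1 m with hlt | heq | hgt
      · left; left
        refine ⟨he, hlt, ?_⟩
        rcases lt_or_eq_of_le h2 with h | h
        · exact h
        · exfalso
          have : e = (m, j) := snd_injOn hm he harc h.symm
          rw [this] at hlt; exact lt_irrefl m hlt
      · right
        exact fst_injOn hm he harc heq
      · left; right
        refine ⟨he, hgt, h1, ?_⟩
        rcases lt_or_eq_of_le h2 with h | h
        · exact h
        · exfalso
          have : e = (m, j) := snd_injOn hm he harc h.symm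
          rw [this] at hgt; exact lt_irrefl m hgt
    · rintro ((h | h) | rfl)
      · obtain ⟨he, h1, h2⟩ := h
        exact ⟨he, lt_trans h1 hmlt, le_of_lt h2⟩
      · obtain ⟨he, h1, h2, h3⟩ := h
        exact ⟨he, h2, le_of_lt h3⟩
      · exact ⟨harc, hmlt, le_refl j⟩
  have hd1 : Disjoint (G.filter fun e => e.1 < m ∧ j < e.2)
      (G.filter fun e => m < e.1 ∧ e.1 < j ∧ j < e.2) := by
    rw [Finset.disjoint_left]
    intro e he1 he2
    have := (Finset.mem_filter.mp he1).2.1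
    have := (Finset.mem_filter.mp he2).2.1
    omega
  have hd2 : Disjoint ((G.filter fun e => e.1 < m ∧ j < e.2)
      ∪ (G.filter fun e => m < e.1 ∧ e.1 < j ∧ j < e.2)) ({(m, j)} : Finset (ℕ × ℕ)) := by
    rw [Finset.disjoint_right]
    intro e he
    rw [Finset.mem_singleton] at he
    subst he
    rw [Finset.mem_union]
    rintro (h | h)
    · have := (Finset.mem_filter.mp h).2.2; omega
    · have := (Finset.mem_filter.mp h).2.2.2; omega
  rw [openc, key, Finset.card_union_of_disjoint hd2, Finset.card_union_of_disjoint hd1,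
    Finset.card_singleton]
  rfl

lemma openc_card (hm : IsMatching n G) (hs : G ⊆ edgesOn (2 * n)) (j : ℕ) :
    openc G j + ((G.image Prod.snd).filter (· < j)).card
      = ((G.image Prod.fst).filter (· < j)).card := by
  have h1 : ((G.image Prod.fst).filter (· < j)) = (G.filter fun e => e.1 < j).image Prod.fst := by
    rw [Finset.filter_image]
  have h2 : ((G.image Prod.snd).filter (· < j)) = (G.filter fun e => e.2 < j).image Prod.snd := by
    rw [Finset.filter_image]
  rw [h1, h2,
    Finset.card_image_of_injOn (fun a ha b hb h =>
      fst_injOn hm (Finset.mem_of_mem_filter a ha) (Finset.mem_of_mem_filter b hb) h),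
    Finset.card_image_of_injOn (fun a ha b hb h =>
      snd_injOn hm (Finset.mem_of_mem_filter a ha) (Finset.mem_of_mem_filter b hb) h)]
  have : G.filter (fun e => e.1 < j)
      = (G.filter fun e => e.1 < j ∧ j ≤ e.2) ∪ (G.filter fun e => e.2 < j) := by
    ext e
    simp only [Finset.mem_union, Finset.mem_filter]
    constructor
    · rintro ⟨he, h⟩
      rcases le_or_gt j e.2 with hle | hlt
      · exact Or.inl ⟨he, h, hle⟩
      · exact Or.inr ⟨he, hlt⟩
    · rintro (⟨he, h, _⟩ | ⟨he, h⟩)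
      · exact ⟨he, h⟩
      · exact ⟨he, lt_trans (edge_bounds hs he).2.1 h⟩
  rw [this, Finset.card_union_of_disjoint]
  · rfl
  · rw [Finset.disjoint_left]
    intro e he1 he2
    have := (Finset.mem_filter.mp he1).2.2
    have := (Finset.mem_filter.mp he2).2
    omega

def runS (L : Finset ℕ) (r : ℕ → ℕ) : ℕ → Finset ℕ × Finset (ℕ × ℕ)
  | 0 => (∅, ∅)
  | p + 1 =>
    let st := runS L r p
    if p + 1 ∈ L then (insert (p + 1) st.1, st.2)
    else (st.1.erase (pick st.1 (r (p + 1))), insert (pick st.1 (r (p + 1)), p + 1) st.2)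
def Inv (n : ℕ) (L : Finset ℕ) (p : ℕ) (st : Finset ℕ × Finset (ℕ × ℕ)) : Prop :=
  leftM st.2 + st.1.val = (L.filter (· ≤ p)).val
  ∧ rightM st.2 = (((Finset.Icc 1 (2 * n)) \ L).filter (· ≤ p)).val
  ∧ ∀ e ∈ st.2, e.1 < e.2

lemma inv_S_subset {p : ℕ} {st : Finset ℕ × Finset (ℕ × ℕ)} (h : Inv n L p st) :
    st.1 ⊆ L.filter (· ≤ p) := by
  rw [← Finset.val_le_iff]
  calc st.1.val ≤ leftM st.2 + st.1.val := le_add_self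
    _ = (L.filter (· ≤ p)).val := h.1

lemma inv_card {p : ℕ} {st : Finset ℕ × Finset (ℕ × ℕ)} (h : Inv n L p st) :
    st.2.card + st.1.card = (L.filter (· ≤ p)).card
    ∧ st.2.card = (((Finset.Icc 1 (2 * n)) \ L).filter (· ≤ p)).card := by
  constructor
  · have := congrArg Multiset.card h.1
    rw [Multiset.card_add, leftM, Multiset.card_map] at this
    exact this
  · have := congrArg Multiset.card h.2.1
    rw [rightM, Multiset.card_map] at this
    exact this

lemma runS_inv (hL : L ⊆ Finset.Icc 1 (2 * n))
    (hr : ∀ j, 1 ≤ j → j ≤ 2 * n → j ∉ L →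
      r j + 1 + (((Finset.Icc 1 (2 * n)) \ L).filter (· < j)).card
        ≤ (L.filter (· < j)).card) :
    ∀ p, p ≤ 2 * n → Inv n L p (runS L r p) := by
  intro p
  induction p with
  | zero =>
    intro _
    rw [show runS L r 0 = (∅, ∅) from rfl]
    refine ⟨?_, ?_, by intro e he; simp at he⟩
    · have h0 : L.filter (· ≤ 0) = ∅ := by
        rw [Finset.filter_eq_empty_iff]
        intro x hx
        have := (Finset.mem_Icc.mp (hL hx)).1
        omega
      rw [h0]
      simp [leftM]
    · have h0 : ((Finset.Icc 1 (2 * n)) \ L).filter (· ≤ 0) = ∅ := by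
        rw [Finset.filter_eq_empty_iff]
        intro x hx
        have := (Finset.mem_Icc.mp (Finset.mem_sdiff.mp hx).1).1
        omega
      rw [h0]
      simp [rightM]
  | succ p ih =>
    intro hp2
    have ih' := ih (by omega)
    set st := runS L r p with hst
    obtain ⟨i1, i2, i3⟩ := ih'
    have hSsub := inv_S_subset ⟨i1, i2, i3⟩
    by_cases hpL : p + 1 ∈ L
    · have hrun : runS L r (p + 1) = (insert (p + 1) st.1, st.2) := by
        rw [runS, if_pos hpL]
      rw [hrun]
      have hpS : p + 1 ∉ st.1 := fun h => by
        have := (Finset.mem_filter.mp (hSsub h)).2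
        omega
      refine ⟨?_, ?_, i3⟩
      · have hfil : L.filter (· ≤ p + 1) = insert (p + 1) (L.filter (· ≤ p)) := by
          ext x
          simp only [Finset.mem_filter, Finset.mem_insert]
          constructor
          · rintro ⟨hx, hle⟩
            rcases Nat.lt_or_ge x (p + 1) with h | h
            · exact Or.inr ⟨hx, by omega⟩
            · exact Or.inl (by omega)
          · rintro (rfl | ⟨hx, hle⟩)
            · exact ⟨hpL, le_refl _⟩
            · exact ⟨hx, by omega⟩
        have hnotin : p + 1 ∉ L.filter (· ≤ p) := fun h => by
          have := (Finset.mem_filter.mp h).2; omega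
        rw [hfil, Finset.insert_val_of_notMem hnotin,
          Finset.insert_val_of_notMem hpS, Multiset.add_cons]
        rw [i1]
      · have hfil : ((Finset.Icc 1 (2 * n)) \ L).filter (· ≤ p + 1)
            = ((Finset.Icc 1 (2 * n)) \ L).filter (· ≤ p) := by
          ext x
          simp only [Finset.mem_filter, Finset.mem_sdiff]
          constructor
          · rintro ⟨⟨hx, hnx⟩, hle⟩
            refine ⟨⟨hx, hnx⟩, ?_⟩
            rcases Nat.eq_or_lt_of_le hle with h | h
            · exfalso; exact hnx (h ▸ hpL)
            · omega
          · rintro ⟨hx, hle⟩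
            exact ⟨hx, by omega⟩
        rw [hfil, i2]
    · -- closing step
      have hm : pick st.1 (r (p + 1)) ∈ st.1 ∧ cnt st.1 (pick st.1 (r (p + 1))) = r (p + 1) := by
        apply pick_spec
        have hcards := inv_card (n := n) ⟨i1, i2, i3⟩
        have hflt : (L.filter (· < p + 1)) = L.filter (· ≤ p) := by
          apply Finset.filter_congr; intro x _; simp [Nat.lt_succ_iff]
        have hflt2 : (((Finset.Icc 1 (2 * n)) \ L).filter (· < p + 1))
            = ((Finset.Icc 1 (2 * n)) \ L).filter (· ≤ p) := by
          apply Finset.filter_congr; intro x _; simp [Nat.lt_succ_iff]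
        have := hr (p + 1) (by omega) (by omega) hpL
        rw [hflt, hflt2] at this
        omega
      set m := pick st.1 (r (p + 1)) with hmdef
      have hrun : runS L r (p + 1) = (st.1.erase m, insert (m, p + 1) st.2) := by
        rw [runS, if_neg hpL]
      rw [hrun]
      have hmL : m ∈ L.filter (· ≤ p) := hSsub hm.1
      have hmLe : m ≤ p := (Finset.mem_filter.mp hmL).2
      have hnotinE : (m, p + 1) ∉ st.2 := by
        intro h
        have : (p + 1 : ℕ) ∈ rightM st.2 := by
          rw [rightM, Multiset.mem_map]
          exact ⟨(m, p + 1), Finset.mem_def.mp h, rfl⟩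
        rw [i2] at this
        have : (p + 1 : ℕ) ∈ ((Finset.Icc 1 (2 * n)) \ L).filter (· ≤ p) :=
          Finset.mem_def.mpr this
        have := (Finset.mem_filter.mp this).2
        omega
      refine ⟨?_, ?_, ?_⟩
      · have hfil : L.filter (· ≤ p + 1) = L.filter (· ≤ p) := by
          ext x
          simp only [Finset.mem_filter]
          constructor
          · rintro ⟨hx, hle⟩
            refine ⟨hx, ?_⟩
            rcases Nat.eq_or_lt_of_le hle with h | h
            · exact absurd (h ▸ hx) hpL
            · omega
          · rintro ⟨hx, hle⟩; exact ⟨hx, by omega⟩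
        rw [hfil, ← i1]
        have hlm : leftM (insert (m, p + 1) st.2) = m ::ₘ leftM st.2 := by
          rw [leftM, Finset.insert_val_of_notMem hnotinE, Multiset.map_cons]
          rfl
        rw [hlm, Finset.erase_val, Multiset.cons_add]
        have : m ::ₘ (st.1.val.erase m) = st.1.val :=
          Multiset.cons_erase (Finset.mem_def.mp hm.1)
        calc m ::ₘ (leftM st.2 + (st.1.val.erase m))
            = leftM st.2 + (m ::ₘ st.1.val.erase m) := by
              rw [Multiset.add_cons]
          _ = leftM st.2 + st.1.val := by rw [this]
      · have hpC : (p + 1) ∈ (Finset.Icc 1 (2 * n)) \ L :=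
          Finset.mem_sdiff.mpr ⟨Finset.mem_Icc.mpr ⟨by omega, by omega⟩, hpL⟩
        have hfil : ((Finset.Icc 1 (2 * n)) \ L).filter (· ≤ p + 1)
            = insert (p + 1) (((Finset.Icc 1 (2 * n)) \ L).filter (· ≤ p)) := by
          ext x
          simp only [Finset.mem_filter, Finset.mem_insert]
          constructor
          · rintro ⟨hx, hle⟩
            rcases Nat.lt_or_ge x (p + 1) with h | h
            · exact Or.inr ⟨hx, by omega⟩
            · exact Or.inl (by omega)
          · rintro (rfl | ⟨hx, hle⟩)
            · exact ⟨hpC, le_refl _⟩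
            · exact ⟨hx, by omega⟩
        have hnotin : (p + 1) ∉ ((Finset.Icc 1 (2 * n)) \ L).filter (· ≤ p) := fun h => by
          have := (Finset.mem_filter.mp h).2; omega
        rw [hfil, Finset.insert_val_of_notMem hnotin]
        rw [rightM, Finset.insert_val_of_notMem hnotinE, Multiset.map_cons]
        rw [← i2]; rfl
      · intro e he
        rcases Finset.mem_insert.mp he with rfl | he
        · simp; omega
        · exact i3 e he

def openS (G : Finset (ℕ × ℕ)) (p : ℕ) : Finset ℕ :=
  (G.filter fun e => e.1 ≤ p ∧ p < e.2).image Prod.fst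

/-- the completed arcs after scanning position `p`. -/
def doneE (G : Finset (ℕ × ℕ)) (p : ℕ) : Finset (ℕ × ℕ) :=
  G.filter fun e => e.2 ≤ p

lemma cnt_openS (hm : IsMatching n G) {p : ℕ} (hp1 : p + 1 ∉ G.image Prod.fst)
    (hj : (p + 1) ∈ G.image Prod.snd) (hlt : fstOf G (p + 1) ≤ p) :
    fstOf G (p + 1) ∈ openS G p ∧ cnt (openS G p) (fstOf G (p + 1)) = rnk G (p + 1) := by
  set m := fstOf G (p + 1) with hmdef
  have harc : (m, p + 1) ∈ G := fstOf_mem hm hj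
  constructor
  · exact Finset.mem_image.mpr ⟨(m, p + 1), Finset.mem_filter.mpr
      ⟨harc, hlt, by omega⟩, rfl⟩
  · rw [cnt, openS, Finset.filter_image]
    rw [Finset.card_image_of_injOn (fun a ha b hb h =>
      fst_injOn hm (Finset.mem_of_mem_filter a (Finset.mem_of_mem_filter a ha))
        (Finset.mem_of_mem_filter b (Finset.mem_of_mem_filter b hb)) h)]
    rw [rnk, Finset.filter_filter]
    congr 1
    apply Finset.filter_congr
    intro e heG
    constructor
    · rintro ⟨⟨h1, h2⟩, h3⟩
      refine ⟨h3, ?_⟩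
      rcases Nat.lt_or_ge (p + 1) e.2 with h | h
      · exact h
      · exfalso
        have he2 : e.2 = p + 1 := by omega
        have : e = (m, p + 1) := snd_injOn hm heG harc he2
        rw [this] at h3
        exact lt_irrefl m h3
    · rintro ⟨h1, h2⟩
      exact ⟨⟨by omega, by omega⟩, h1⟩

lemma replay (hm : IsMatching n G) (hs : G ⊆ edgesOn (2 * n)) :
    ∀ p, p ≤ 2 * n → runS (G.image Prod.fst) (rnk G) p = (openS G p, doneE G p) := by
  intro p
  induction p with
  | zero =>
    intro _
    rw [show runS (G.image Prod.fst) (rnk G) 0 = (∅, ∅) from rfl]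
    have h1 : openS G 0 = ∅ := by
      rw [openS, Finset.image_eq_empty, Finset.filter_eq_empty_iff]
      intro e he
      have := (edge_bounds hs he).1
      omega
    have h2 : doneE G 0 = ∅ := by
      rw [doneE, Finset.filter_eq_empty_iff]
      intro e he
      have := (edge_bounds hs he).1
      have := (edge_bounds hs he).2.1
      omega
    rw [h1, h2]
  | succ p ih =>
    intro hp2
    have ih' := ih (by omega)
    by_cases hpL : p + 1 ∈ G.image Prod.fst
    · rw [runS, if_pos hpL, ih']
      have hnotR : p + 1 ∉ G.image Prod.snd := by
        rw [Rset_eq hm]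
        simp [hpL]
      refine Prod.ext ?_ ?_
      · -- openS G (p+1) = insert (p+1) (openS G p)
        show insert (p + 1) (openS G p) = openS G (p + 1)
        ext x
        simp only [Finset.mem_insert, openS, Finset.mem_image, Finset.mem_filter]
        constructor
        · rintro (rfl | ⟨e, ⟨he, h1, h2⟩, rfl⟩)
          · rcases Finset.mem_image.mp hpL with ⟨e, he, he1⟩
            refine ⟨e, ⟨he, by omega, ?_⟩, he1⟩
            have := (edge_bounds hs he).2.1
            omega
          · refine ⟨e, ⟨he, by omega, ?_⟩, rfl⟩
            have : e.2 ≠ p + 1 := fun hc =>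
              hnotR (Finset.mem_image.mpr ⟨e, he, hc⟩)
            omega
        · rintro ⟨e, ⟨he, h1, h2⟩, rfl⟩
          rcases Nat.eq_or_lt_of_le h1 with h | h
          · exact Or.inl h
          · exact Or.inr ⟨e, ⟨he, by omega, by omega⟩, rfl⟩
      · show doneE G p = doneE G (p + 1)
        rw [doneE, doneE]
        apply Finset.filter_congr
        intro e heG
        have : e.2 ≠ p + 1 := fun hc =>
          hnotR (Finset.mem_image.mpr ⟨e, heG, hc⟩)
        constructor <;> (intro; omega)
    · rw [runS, if_neg hpL, ih']
      have hjR : p + 1 ∈ G.image Prod.snd := by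
        rw [Rset_eq hm]
        exact Finset.mem_sdiff.mpr ⟨Finset.mem_Icc.mpr ⟨by omega, by omega⟩, hpL⟩
      set m := fstOf G (p + 1) with hmdef
      have harc : (m, p + 1) ∈ G := fstOf_mem hm hjR
      have hmle : m ≤ p := by
        have := (edge_bounds hs harc).2.1
        omega
      have hcnt := cnt_openS hm hpL hjR hmle
      have hpick : pick (openS G p) (rnk G (p + 1)) = m := pick_eq hcnt.1 hcnt.2
      simp only [hpick]
      refine Prod.ext ?_ ?_
      · show (openS G p).erase m = openS G (p + 1)
        ext x
        simp only [Finset.mem_erase, openS, Finset.mem_image, Finset.mem_filter]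
        constructor
        · rintro ⟨hne, e, ⟨he, h1, h2⟩, rfl⟩
          refine ⟨e, ⟨he, by omega, ?_⟩, rfl⟩
          have : e.2 ≠ p + 1 := by
            intro hc
            have : e = (m, p + 1) := snd_injOn hm he harc hc
            rw [this] at hne
            exact hne rfl
          omega
        · rintro ⟨e, ⟨he, h1, h2⟩, rfl⟩
          have he1 : e.1 ≠ p + 1 := fun hc =>
            hpL (Finset.mem_image.mpr ⟨e, he, hc⟩)
          refine ⟨?_, e, ⟨he, by omega, by omega⟩, rfl⟩
          intro hc
          have : e = (m, p + 1) := fst_injOn hm he harc hc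
          rw [this] at h2
          omega
      · show insert (m, p + 1) (doneE G p) = doneE G (p + 1)
        ext e
        simp only [Finset.mem_insert, doneE, Finset.mem_filter]
        constructor
        · rintro (rfl | ⟨he, h⟩)
          · exact ⟨harc, le_refl _⟩
          · exact ⟨he, by omega⟩
        · rintro ⟨he, h⟩
          rcases Nat.eq_or_lt_of_le h with h | h
          · exact Or.inl (snd_injOn hm he harc h)
          · exact Or.inr ⟨he, by omega⟩

lemma filter_le_2n_L (hL : L ⊆ Finset.Icc 1 (2 * n)) :
    L.filter (· ≤ 2 * n) = L := by
  apply Finset.filter_true_of_mem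
  intro x hx
  exact (Finset.mem_Icc.mp (hL hx)).2

lemma filter_le_2n_C :
    ((Finset.Icc 1 (2 * n)) \ L).filter (· ≤ 2 * n) = (Finset.Icc 1 (2 * n)) \ L := by
  apply Finset.filter_true_of_mem
  intro x hx
  exact (Finset.mem_Icc.mp (Finset.mem_sdiff.mp hx).1).2

lemma runS_final (hL : L ⊆ Finset.Icc 1 (2 * n))
    (hr : ∀ j, 1 ≤ j → j ≤ 2 * n → j ∉ L →
      r j + 1 + (((Finset.Icc 1 (2 * n)) \ L).filter (· < j)).card
        ≤ (L.filter (· < j)).card)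
    (hcard : ((Finset.Icc 1 (2 * n)) \ L).card = L.card) :
    IsMatching n (runS L r (2 * n)).2 ∧ (runS L r (2 * n)).2 ⊆ edgesOn (2 * n)
    ∧ (runS L r (2 * n)).2.image Prod.fst = L := by
  have hinv := runS_inv hL hr (2 * n) (le_refl _)
  obtain ⟨i1, i2, i3⟩ := hinv
  rw [filter_le_2n_L hL] at i1
  rw [filter_le_2n_C] at i2
  have hcards := inv_card (n := n) (L := L) (p := 2 * n) ⟨by rw [filter_le_2n_L hL]; exact i1,
    by rw [filter_le_2n_C]; exact i2, i3⟩
  rw [filter_le_2n_L hL, filter_le_2n_C] at hcards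
  have hS0 : (runS L r (2 * n)).1 = ∅ := by
    rw [← Finset.card_eq_zero]
    omega
  rw [hS0] at i1
  simp only [Finset.empty_val, add_zero] at i1
  have hmm : IsMatching n (runS L r (2 * n)).2 := by
    show leftM _ + rightM _ = _
    rw [i1, i2, Finset.sdiff_val, add_tsub_cancel_of_le (Finset.val_le_iff.mpr hL)]
  refine ⟨hmm, ?_, ?_⟩
  · intro e he
    have he1 : e.1 ∈ L := by
      have h1 : e.1 ∈ leftM (runS L r (2 * n)).2 :=
        Multiset.mem_map.mpr ⟨e, Finset.mem_def.mp he, rfl⟩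
      rw [i1] at h1
      exact Finset.mem_def.mpr h1
    have he2 : e.2 ∈ (Finset.Icc 1 (2 * n)) \ L := by
      have h1 : e.2 ∈ rightM (runS L r (2 * n)).2 :=
        Multiset.mem_map.mpr ⟨e, Finset.mem_def.mp he, rfl⟩
      rw [i2] at h1
      exact Finset.mem_def.mpr h1
    simp only [edgesOn, Finset.mem_filter, Finset.mem_product]
    exact ⟨⟨hL he1, (Finset.mem_sdiff.mp he2).1⟩, i3 e he⟩
  · apply Finset.val_injective
    rw [Finset.image_val]
    rw [show Multiset.map Prod.fst (runS L r (2 * n)).2.val = leftM (runS L r (2 * n)).2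
      from rfl, i1]
    exact Multiset.dedup_eq_self.mpr L.nodup

lemma runS_congr {r' : ℕ → ℕ}
    (h : ∀ j, 1 ≤ j → j ≤ 2 * n → j ∉ L → r j = r' j) :
    ∀ p, p ≤ 2 * n → runS L r p = runS L r' p := by
  intro p
  induction p with
  | zero => intro _; rfl
  | succ p ih =>
    intro hp
    have ih' := ih (by omega)
    by_cases hpL : p + 1 ∈ L
    · rw [runS, if_pos hpL, runS, if_pos hpL, ih']
    · rw [runS, if_neg hpL, runS, if_neg hpL, ih', h (p + 1) (by omega) (by omega) hpL]

lemma runS_mono : ∀ p q, p ≤ q → (runS L r p).2 ⊆ (runS L r q).2 := by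
  intro p q hpq
  induction q with
  | zero =>
    have : p = 0 := by omega
    subst this; exact subset_rfl
  | succ q ih =>
    rcases Nat.eq_or_lt_of_le hpq with h | h
    · subst h; exact subset_rfl
    · have := ih (by omega)
      refine this.trans ?_
      by_cases hqL : q + 1 ∈ L
      · rw [runS, if_pos hqL]
      · rw [runS, if_neg hqL]
        exact Finset.subset_insert _ _

lemma r_lt_card (hL : L ⊆ Finset.Icc 1 (2 * n))
    (hr : ∀ j, 1 ≤ j → j ≤ 2 * n → j ∉ L →
      r j + 1 + (((Finset.Icc 1 (2 * n)) \ L).filter (· < j)).card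
        ≤ (L.filter (· < j)).card)
    {p : ℕ} (hp : p + 1 ≤ 2 * n) (hpL : p + 1 ∉ L) :
    r (p + 1) < (runS L r p).1.card := by
  have hinv := runS_inv hL hr p (by omega)
  have hcards := inv_card (n := n) hinv
  have hflt : (L.filter (· < p + 1)) = L.filter (· ≤ p) := by
    apply Finset.filter_congr; intro x _; simp [Nat.lt_succ_iff]
  have hflt2 : (((Finset.Icc 1 (2 * n)) \ L).filter (· < p + 1))
      = ((Finset.Icc 1 (2 * n)) \ L).filter (· ≤ p) := by
    apply Finset.filter_congr; intro x _; simp [Nat.lt_succ_iff]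
  have := hr (p + 1) (by omega) (by omega) hpL
  rw [hflt, hflt2] at this
  omega

lemma align (hL : L ⊆ Finset.Icc 1 (2 * n))
    (hr : ∀ j, 1 ≤ j → j ≤ 2 * n → j ∉ L →
      r j + 1 + (((Finset.Icc 1 (2 * n)) \ L).filter (· < j)).card
        ≤ (L.filter (· < j)).card)
    (hm' : IsMatching n (runS L r (2 * n)).2)
    (hs' : (runS L r (2 * n)).2 ⊆ edgesOn (2 * n))
    (himg : (runS L r (2 * n)).2.image Prod.fst = L) :
    ∀ p, p ≤ 2 * n →
      runS L r p = runS L (rnk (runS L r (2 * n)).2) p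
      ∧ ∀ j, 1 ≤ j → j ≤ p → j ∉ L → r j = rnk (runS L r (2 * n)).2 j := by
  set G' := (runS L r (2 * n)).2 with hG'
  intro p
  induction p with
  | zero =>
    intro _
    exact ⟨rfl, by intro j h1 h2 _; omega⟩
  | succ p ih =>
    intro hp
    obtain ⟨ihst, ihr⟩ := ih (by omega)
    by_cases hpL : p + 1 ∈ L
    · constructor
      · rw [runS, if_pos hpL]
        conv_rhs => rw [runS, if_pos hpL]
        rw [ihst]
      · intro j h1 h2 hjL
        rcases Nat.eq_or_lt_of_le h2 with h | h
        · exact absurd (h ▸ hpL) (h ▸ hjL)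
        · exact ihr j h1 (by omega) hjL
    · -- closer step
      have hrepl := replay hm' hs'
      rw [himg] at hrepl
      have hstate : runS L r p = (openS G' p, doneE G' p) := by
        rw [ihst, hrepl p (by omega)]
      have hjR : p + 1 ∈ G'.image Prod.snd := by
        rw [Rset_eq hm', himg]
        exact Finset.mem_sdiff.mpr ⟨Finset.mem_Icc.mpr ⟨by omega, by omega⟩, hpL⟩
      have harc' : (fstOf G' (p + 1), p + 1) ∈ G' := fstOf_mem hm' hjR
      have hfle : fstOf G' (p + 1) ≤ p := by
        have := (edge_bounds hs' harc').2.1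
        omega
      have hpL' : p + 1 ∉ G'.image Prod.fst := by rw [himg]; exact hpL
      have hcnt := cnt_openS hm' hpL' hjR hfle
      -- the pick of the r-run
      have hrlt : r (p + 1) < (runS L r p).1.card := r_lt_card hL hr hp hpL
      have hpickr := pick_spec hrlt
      set m := pick (runS L r p).1 (r (p + 1)) with hmdef
      -- (m, p+1) lands in G'
      have hmem : (m, p + 1) ∈ G' := by
        have : (m, p + 1) ∈ (runS L r (p + 1)).2 := by
          rw [runS, if_neg hpL]
          exact Finset.mem_insert_self _ _
        exact runS_mono (p + 1) (2 * n) hp this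
      have hfst : fstOf G' (p + 1) = m := fstOf_eq hm' hmem
      -- the pick of the rnk-run is the same element
      have hpick2 : pick (runS L r p).1 (rnk G' (p + 1)) = m := by
        rw [hstate]
        show pick (openS G' p) (rnk G' (p + 1)) = m
        rw [← hfst]
        exact pick_eq hcnt.1 hcnt.2
      have hreq : r (p + 1) = rnk G' (p + 1) := by
        have h1 : cnt (runS L r p).1 m = r (p + 1) := hpickr.2
        have h2 : cnt (openS G' p) (fstOf G' (p + 1)) = rnk G' (p + 1) := hcnt.2
        rw [hfst] at h2
        rw [hstate] at h1
        rw [← h1, ← h2]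
      constructor
      · rw [runS, if_neg hpL]
        conv_rhs => rw [runS, if_neg hpL]
        rw [← ihst, hpick2, ← hmdef]
      · intro j h1 h2 hjL
        rcases Nat.eq_or_lt_of_le h2 with h | h
        · rw [h]; exact hreq
        · exact ihr j h1 (by omega) hjL

lemma L_subset (hm : IsMatching n G) (hs : G ⊆ edgesOn (2 * n)) :
    G.image Prod.fst ⊆ Finset.Icc 1 (2 * n) := by
  intro x hx
  rcases Finset.mem_image.mp hx with ⟨e, he, rfl⟩
  have := edge_bounds hs he
  exact Finset.mem_Icc.mpr ⟨this.1, by omega⟩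

lemma hr_cork (hm : IsMatching n G) (hs : G ⊆ edgesOn (2 * n)) :
    ∀ j, 1 ≤ j → j ≤ 2 * n → j ∉ G.image Prod.fst →
      cork G j + 1 + (((Finset.Icc 1 (2 * n)) \ G.image Prod.fst).filter (· < j)).card
        ≤ ((G.image Prod.fst).filter (· < j)).card := by
  intro j h1 h2 hjL
  have hjR : j ∈ G.image Prod.snd := by
    rw [Rset_eq hm]
    exact Finset.mem_sdiff.mpr ⟨Finset.mem_Icc.mpr ⟨h1, h2⟩, hjL⟩
  have hA := rnk_cork_openc hm hs hjR
  have hB := openc_card hm hs j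
  rw [Rset_eq hm] at hB
  omega

lemma hcard_G (hm : IsMatching n G) :
    ((Finset.Icc 1 (2 * n)) \ G.image Prod.fst).card = (G.image Prod.fst).card := by
  rw [← Rset_eq hm,
    Finset.card_image_of_injOn (fun a ha b hb h => snd_injOn hm ha hb h),
    Finset.card_image_of_injOn (fun a ha b hb h => fst_injOn hm ha hb h)]

/-- The crossing–nesting exchanging involution. -/
def Phi (n : ℕ) (G : Finset (ℕ × ℕ)) : Finset (ℕ × ℕ) :=
  (runS (G.image Prod.fst) (cork G) (2 * n)).2

lemma Phi_spec (hm : IsMatching n G) (hs : G ⊆ edgesOn (2 * n)) :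
    IsMatching n (Phi n G) ∧ Phi n G ⊆ edgesOn (2 * n)
    ∧ (Phi n G).image Prod.fst = G.image Prod.fst
    ∧ ∀ j, 1 ≤ j → j ≤ 2 * n → j ∉ G.image Prod.fst → cork G j = rnk (Phi n G) j := by
  have h1 := runS_final (L_subset hm hs) (hr_cork hm hs) (hcard_G hm)
  refine ⟨h1.1, h1.2.1, h1.2.2, ?_⟩
  have h2 := (align (L_subset hm hs) (hr_cork hm hs) h1.1 h1.2.1 h1.2.2 (2 * n) (le_refl _)).2
  intro j hj1 hj2 hjL
  exact h2 j hj1 hj2 hjL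

lemma Phi_Rset (hm : IsMatching n G) (hs : G ⊆ edgesOn (2 * n)) :
    (Phi n G).image Prod.snd = G.image Prod.snd := by
  obtain ⟨hm', _, himg, _⟩ := Phi_spec hm hs
  rw [Rset_eq hm', himg, ← Rset_eq hm]

lemma Phi_cork (hm : IsMatching n G) (hs : G ⊆ edgesOn (2 * n)) :
    ∀ j, 1 ≤ j → j ≤ 2 * n → j ∉ G.image Prod.fst → cork (Phi n G) j = rnk G j := by
  obtain ⟨hm', hs', himg, hrnk⟩ := Phi_spec hm hs
  intro j h1 h2 hjL
  have hjR : j ∈ G.image Prod.snd := by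
    rw [Rset_eq hm]
    exact Finset.mem_sdiff.mpr ⟨Finset.mem_Icc.mpr ⟨h1, h2⟩, hjL⟩
  have hjR' : j ∈ (Phi n G).image Prod.snd := by rw [Phi_Rset hm hs]; exact hjR
  have hA := rnk_cork_openc hm hs hjR
  have hA' := rnk_cork_openc hm' hs' hjR'
  have hB := openc_card hm hs j
  have hB' := openc_card hm' hs' j
  rw [Phi_Rset hm hs, himg] at hB'
  have := hrnk j h1 h2 hjL
  omega

lemma mem_Rset_cond (hm : IsMatching n G) {j : ℕ} (hj : j ∈ G.image Prod.snd) :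
    1 ≤ j ∧ j ≤ 2 * n ∧ j ∉ G.image Prod.fst := by
  rw [Rset_eq hm] at hj
  rcases Finset.mem_sdiff.mp hj with ⟨h1, h2⟩
  rcases Finset.mem_Icc.mp h1 with ⟨h11, h12⟩
  exact ⟨h11, h12, h2⟩

lemma Phi_nest2 (hm : IsMatching n G) (hs : G ⊆ edgesOn (2 * n)) :
    nest2 (Phi n G) = cros2 G := by
  obtain ⟨hm', hs', himg, hrnk⟩ := Phi_spec hm hs
  rw [nest2_eq hm' hs', cros2_eq hm hs, Phi_Rset hm hs]
  apply Finset.sum_congr rfl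
  intro j hj
  obtain ⟨h1, h2, h3⟩ := mem_Rset_cond hm hj
  exact (hrnk j h1 h2 h3).symm

lemma Phi_cros2 (hm : IsMatching n G) (hs : G ⊆ edgesOn (2 * n)) :
    cros2 (Phi n G) = nest2 G := by
  obtain ⟨hm', hs', himg, hrnk⟩ := Phi_spec hm hs
  rw [cros2_eq hm' hs', nest2_eq hm hs, Phi_Rset hm hs]
  apply Finset.sum_congr rfl
  intro j hj
  obtain ⟨h1, h2, h3⟩ := mem_Rset_cond hm hj
  exact Phi_cork hm hs j h1 h2 h3

lemma Phi_Phi (hm : IsMatching n G) (hs : G ⊆ edgesOn (2 * n)) :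
    Phi n (Phi n G) = G := by
  obtain ⟨hm', hs', himg, hrnk⟩ := Phi_spec hm hs
  show (runS ((Phi n G).image Prod.fst) (cork (Phi n G)) (2 * n)).2 = G
  rw [himg]
  rw [runS_congr (r := cork (Phi n G)) (r' := rnk G)
    (fun j h1 h2 h3 => Phi_cork hm hs j h1 h2 h3) (2 * n) (le_refl _)]
  rw [replay hm hs (2 * n) (le_refl _)]
  show doneE G (2 * n) = G
  apply Finset.filter_true_of_mem
  intro e he
  exact (edge_bounds hs he).2.2

end CN

/-- The joint statistic `(cros₂, nest₂)` is symmetrically distributed over perfect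
matchings of `[2n]`. -/
theorem cros_nest_symmetric_over_matchings (n k ℓ : ℕ) :
    ((edgesOn (2 * n)).powerset.filter fun G =>
        IsMatching n G ∧ cros2 G = k ∧ nest2 G = ℓ).card =
    ((edgesOn (2 * n)).powerset.filter fun G =>
        IsMatching n G ∧ cros2 G = ℓ ∧ nest2 G = k).card := by
  apply Finset.card_bij' (fun G _ => CN.Phi n G) (fun G _ => CN.Phi n G)
  · intro G hG
    rw [Finset.mem_filter, Finset.mem_powerset] at hG ⊢
    obtain ⟨hs, hm, hc, hn⟩ := hG
    obtain ⟨hm', hs', _, _⟩ := CN.Phi_spec hm hs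
    exact ⟨hs', hm', by rw [CN.Phi_cros2 hm hs, hn], by rw [CN.Phi_nest2 hm hs, hc]⟩
  · intro G hG
    rw [Finset.mem_filter, Finset.mem_powerset] at hG ⊢
    obtain ⟨hs, hm, hc, hn⟩ := hG
    obtain ⟨hm', hs', _, _⟩ := CN.Phi_spec hm hs
    exact ⟨hs', hm', by rw [CN.Phi_cros2 hm hs, hn], by rw [CN.Phi_nest2 hm hs, hc]⟩
  · intro G hG
    rw [Finset.mem_filter, Finset.mem_powerset] at hG
    exact CN.Phi_Phi hG.2.1 hG.1
  · intro G hG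
    rw [Finset.mem_filter, Finset.mem_powerset] at hG
    exact CN.Phi_Phi hG.2.1 hG.1
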